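/- Let H be a Hopf algebra with bijective antipode over a field k. View k as a right H-module via a character δ: H → k and as a left H-comodule via a group-like element σ ∈ H (so the coaction is 1 ↦ σ ⊗ 1). Then k with these structures is a stable anti-Yetter-Drinfeld module if and only if (δ, σ) is a modular pair in involution, i.e., δ(σ) = 1 and the twisted antipode S̃(h) := δ(h^{(1)}) S(h^{(2)}) satisfies S̃²(h) = σ h σ^{-1} for all h ∈ H. -/

import Mathlib

open TensorProduct

namespace HC

variable {k : Type} [Field k]
variable {H : Type} [Ring H] [Algebra k H]
variable {M : Type} [AddCommGroup M] [Module k M]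

/-- The right-left anti-Yetter-Drinfeld condition
`Δ_M(mh) = S(h⁽³⁾) m⁽⁻¹⁾ h⁽¹⁾ ⊗ m⁽⁰⁾ h⁽²⁾`, phrased via arbitrary finite
Sweedler representations.  Here the right action is given in curried form:
`m · h = act h m`. -/
def AYDrl (Δ : H →ₗ[k] H ⊗[k] H) (S : H →ₗ[k] H)
    (act : H →ₗ[k] M →ₗ[k] M) (coact : M →ₗ[k] H ⊗[k] M) : Prop :=
  ∀ (h : H) (m : M) (s : Finset ℕ) (a b : ℕ → H)
    (t : ℕ → Finset ℕ) (c d : ℕ → ℕ → H)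
    (u : Finset ℕ) (e : ℕ → H) (m0 : ℕ → M),
    Δ h = ∑ i ∈ s, a i ⊗ₜ b i →
    (∀ i ∈ s, Δ (b i) = ∑ j ∈ t i, c i j ⊗ₜ d i j) →
    coact m = ∑ l ∈ u, e l ⊗ₜ m0 l →
    coact (act h m) = ∑ i ∈ s, ∑ j ∈ t i, ∑ l ∈ u,
      (S (d i j) * e l * a i) ⊗ₜ act (c i j) (m0 l)

/-- Stability for a left comodule: `action ∘ coaction = id`
(i.e. `m⁽⁰⁾ · m⁽⁻¹⁾ = m` in the right-module case). -/
def StableL (act : H →ₗ[k] M →ₗ[k] M) (coact : M →ₗ[k] H ⊗[k] M) : Prop :=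
  ∀ (m : M) (u : Finset ℕ) (e : ℕ → H) (m0 : ℕ → M),
    coact m = ∑ l ∈ u, e l ⊗ₜ m0 l →
    ∑ l ∈ u, act (e l) (m0 l) = m

end HC

open HC TensorProduct

variable {k : Type} [Field k] {H : Type} [Ring H] [HopfAlgebra k H]

/-- The twisted antipode `S̃(h) = δ(h⁽¹⁾) S(h⁽²⁾)` attached to a character `δ`. -/
noncomputable def twistedAntipode (δ : H →ₐ[k] k) : H →ₗ[k] H :=
  (TensorProduct.lift (LinearMap.mk₂ k
      (fun h1 h2 => δ h1 • HopfAlgebra.antipode (R := k) h2)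
      (by intros; simp [add_smul])
      (by intros; simp [mul_smul])
      (by intros; simp [smul_add])
      (by intros c m n; simp [smul_comm c (δ m)]))) ∘ₗ
    Coalgebra.comul (R := k)

/-!
Stability of `k` says `δ σ = 1`, and the anti-Yetter–Drinfeld condition says
`S̃(h⁽²⁾) σ h⁽¹⁾ = δ(h) σ`, i.e. `S̃(h⁽²⁾) Ad_σ(h⁽¹⁾) = δ(h)`. Applying the anti-multiplicative
map `S̃` to `S̃(h⁽¹⁾) h⁽²⁾ = δ(h)` shows that `S̃²` solves the same equation
`S̃(h⁽²⁾) f(h⁽¹⁾) = δ(h)` in `f`. This equation has at most one solution: read in the convolution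
ring of linear maps `H → Hᵐᵒᵖ`, it says `f ⋆ S̃ = δ`, and `S̃` has the right inverse
`h ↦ δ(S h⁽²⁾) S²(h⁽¹⁾)` there, because `S²(h⁽²⁾) S(h⁽¹⁾) = S(h⁽¹⁾ S(h⁽²⁾)) = ε(h)`.
-/

open Coalgebra WithConv

lemma Coalgebra.nonempty_repr_nat {R A : Type*} [CommSemiring R] [AddCommMonoid A] [Module R A]
    [CoalgebraStruct R A] (a : A) : Nonempty (Repr R a ℕ) := by
  obtain ⟨n, l, r, h⟩ := exists_sum_tmul_eq (comul (R := R) a)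
  refine ⟨⟨Finset.range n, fun i => if hi : i < n then l ⟨i, hi⟩ else 0,
    fun i => if hi : i < n then r ⟨i, hi⟩ else 0, ?_⟩⟩
  rw [h, Finset.sum_range]
  simp

namespace HopfAlgebra

variable {R A : Type*} [CommSemiring R] [Semiring A] [HopfAlgebra R A]

def opConv (f : A →ₗ[R] A) : WithConv (A →ₗ[R] Aᵐᵒᵖ) :=
  toConv ((MulOpposite.opLinearEquiv R).toLinearMap ∘ₗ f)

lemma opConv_injective : Function.Injective (opConv (R := R) (A := A)) := fun f g hfg => by
  ext h
  simpa [opConv] using congr($hfg h)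

lemma opConv_mul_apply {h : A} {ι : Type*} (r : Repr R h ι) (f g : A →ₗ[R] A) :
    (opConv f * opConv g) h = .op (∑ i ∈ r.index, g (r.right i) * f (r.left i)) := by
  simp [r.convMul_apply, opConv]

lemma opConv_antipode_mul_opConv_antipode_comp_antipode :
    opConv (antipode R) * opConv (antipode R ∘ₗ antipode R) = (1 : WithConv (A →ₗ[R] Aᵐᵒᵖ)) := by
  ext h
  rw [opConv_mul_apply (ℛ R h)]
  simp [← antipode_mul_antidistrib, ← map_sum, sum_mul_antipode_eq_algebraMap_counit,
    Algebra.algebraMap_eq_smul_one]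

lemma opConv_character_mul_opConv_character_comp_antipode (δ : A →ₐ[R] R) :
    opConv (Algebra.linearMap R A ∘ₗ δ.toLinearMap) *
      opConv (Algebra.linearMap R A ∘ₗ δ.toLinearMap ∘ₗ antipode R) = 1 := by
  ext h
  rw [opConv_mul_apply (ℛ R h)]
  simp only [LinearMap.comp_apply, AlgHom.toLinearMap_apply, Algebra.linearMap_apply,
    ← map_mul (algebraMap R A), mul_comm (δ (antipode R _))]
  simp [← map_mul, ← map_sum, sum_mul_antipode_eq_algebraMap_counit]

end HopfAlgebra

open HopfAlgebra

section TwistedAntipode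

variable (δ : H →ₐ[k] k)

lemma twistedAntipode_apply {h : H} {ι : Type*} (r : Repr k h ι) :
    twistedAntipode δ h = ∑ i ∈ r.index, δ (r.left i) • antipode k (r.right i) := by
  simp [twistedAntipode, ← r.eq]

lemma toConv_twistedAntipode :
    toConv (twistedAntipode δ) =
      toConv (Algebra.linearMap k H ∘ₗ δ.toLinearMap) * toConv (antipode k) := by
  ext h
  simp [(ℛ k h).convMul_apply, twistedAntipode_apply δ (ℛ k h), Algebra.smul_def]

lemma twistedAntipode_one : twistedAntipode δ 1 = 1 := by
  simp [twistedAntipode, Bialgebra.comul_one, Algebra.TensorProduct.one_def]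

lemma twistedAntipode_mul (x y : H) :
    twistedAntipode δ (x * y) = twistedAntipode δ y * twistedAntipode δ x := by
  rw [twistedAntipode_apply δ ((ℛ k x).mul (ℛ k y)), twistedAntipode_apply δ (ℛ k x),
    twistedAntipode_apply δ (ℛ k y), Finset.sum_mul_sum, Repr.mul_index, Finset.sum_product,
    Finset.sum_comm]
  simp [antipode_mul_antidistrib, smul_smul]

lemma sum_twistedAntipode_mul {h : H} {ι : Type*} (r : Repr k h ι) :
    ∑ i ∈ r.index, twistedAntipode δ (r.left i) * r.right i = algebraMap k H (δ h) :=
  calc ∑ i ∈ r.index, twistedAntipode δ (r.left i) * r.right i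
      = (toConv (twistedAntipode δ) * toConv LinearMap.id : WithConv (H →ₗ[k] H)) h :=
        by rw [r.convMul_apply]; rfl
    _ = (toConv (Algebra.linearMap k H ∘ₗ δ.toLinearMap) *
          (toConv (antipode k) * toConv LinearMap.id) : WithConv (H →ₗ[k] H)) h := by
        rw [toConv_twistedAntipode, mul_assoc]
    _ = algebraMap k H (δ h) := by rw [LinearMap.antipode_mul_id, mul_one]; rfl

lemma opConv_twistedAntipode :
    opConv (twistedAntipode δ) =
      opConv (Algebra.linearMap k H ∘ₗ δ.toLinearMap) * opConv (antipode k) := by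
  ext h
  rw [opConv_mul_apply (ℛ k h)]
  simp [opConv, twistedAntipode_apply δ (ℛ k h), Algebra.smul_def, Algebra.commutes]

lemma opConv_twistedAntipode_mul_right_inverse :
    opConv (twistedAntipode δ) * (opConv (antipode k ∘ₗ antipode k (A := H)) *
      opConv (Algebra.linearMap k H ∘ₗ δ.toLinearMap ∘ₗ antipode k (A := H))) = 1 := by
  rw [opConv_twistedAntipode, mul_assoc, ← mul_assoc (opConv (antipode k (A := H))),
    opConv_antipode_mul_opConv_antipode_comp_antipode, one_mul,
    opConv_character_mul_opConv_character_comp_antipode]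

lemma opConv_twistedAntipode_comp_twistedAntipode_mul :
    opConv (twistedAntipode δ ∘ₗ twistedAntipode δ) * opConv (twistedAntipode δ) =
      opConv (Algebra.linearMap k H ∘ₗ δ.toLinearMap) := by
  ext h
  rw [opConv_mul_apply (ℛ k h)]
  simp [← twistedAntipode_mul, ← map_sum, sum_twistedAntipode_mul, opConv,
    Algebra.algebraMap_eq_smul_one, twistedAntipode_one]

lemma opConv_mul_opConv_twistedAntipode_eq_iff (f : H →ₗ[k] H) :
    opConv f * opConv (twistedAntipode δ) = opConv (Algebra.linearMap k H ∘ₗ δ.toLinearMap) ↔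
      f = twistedAntipode δ ∘ₗ twistedAntipode δ := by
  refine ⟨fun hf => opConv_injective ?_,
    fun hf => hf ▸ opConv_twistedAntipode_comp_twistedAntipode_mul δ⟩
  have hinv := opConv_twistedAntipode_mul_right_inverse δ
  calc opConv f = opConv f * opConv (twistedAntipode δ) * _ := by rw [mul_assoc, hinv, mul_one]
    _ = opConv (twistedAntipode δ ∘ₗ twistedAntipode δ) * opConv (twistedAntipode δ) * _ := by
        rw [hf, opConv_twistedAntipode_comp_twistedAntipode_mul]
    _ = _ := by rw [mul_assoc, hinv, mul_one]

end TwistedAntipode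

lemma stableL_scalar_iff {B : Type} [Ring B] [Algebra k B] (δ : B →ₐ[k] k) (σ : B) :
    StableL ((LinearMap.mul k k) ∘ₗ δ.toLinearMap)
      (LinearMap.toSpanSingleton k (B ⊗[k] k) (σ ⊗ₜ (1 : k))) ↔ δ σ = 1 := by
  refine ⟨fun hst => by simpa using hst 1 {0} (fun _ => σ) (fun _ => 1) (by simp),
    fun hδσ m u e m0 hco => ?_⟩
  have := congr(TensorProduct.lift ((LinearMap.mul k k) ∘ₗ δ.toLinearMap) $hco)
  simpa [hδσ] using this.symm

section ScalarModule

variable (δ : H →ₐ[k] k) (σ : H)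

lemma rid_aydrl_sum_eq_smul {m : k} {s : Finset ℕ} {a b : ℕ → H} {t : ℕ → Finset ℕ}
    {c d : ℕ → ℕ → H} {u : Finset ℕ} {e : ℕ → H} {m0 : ℕ → k}
    (hb : ∀ i ∈ s, comul (R := k) (b i) = ∑ j ∈ t i, c i j ⊗ₜ d i j)
    (hco : LinearMap.toSpanSingleton k (H ⊗[k] k) (σ ⊗ₜ (1 : k)) m = ∑ l ∈ u, e l ⊗ₜ m0 l) :
    TensorProduct.rid k H (∑ i ∈ s, ∑ j ∈ t i, ∑ l ∈ u,
      (antipode k (d i j) * e l * a i) ⊗ₜ[k]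
        ((LinearMap.mul k k ∘ₗ δ.toLinearMap) (c i j) (m0 l))) =
      m • ∑ i ∈ s, twistedAntipode δ (b i) * σ * a i := by
  have he : ∑ l ∈ u, m0 l • e l = m • σ := by simpa using congr(TensorProduct.rid k H $hco).symm
  simp only [map_sum, TensorProduct.rid_tmul, LinearMap.comp_apply, AlgHom.toLinearMap_apply,
    LinearMap.mul_apply', Finset.smul_sum]
  refine Finset.sum_congr rfl fun i hi => ?_
  rw [twistedAntipode_apply δ ⟨t i, c i, d i, (hb i hi).symm⟩, Finset.sum_mul, Finset.sum_mul,
    Finset.smul_sum]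
  refine Finset.sum_congr rfl fun j _ => ?_
  calc ∑ l ∈ u, (δ (c i j) * m0 l) • (antipode k (d i j) * e l * a i)
      = δ (c i j) • (antipode k (d i j) * (∑ l ∈ u, m0 l • e l) * a i) := by
        simp [Finset.mul_sum, Finset.sum_mul, Finset.smul_sum, mul_smul]
    _ = m • (δ (c i j) • antipode k (d i j) * σ * a i) := by
        rw [he]
        simp [smul_comm m]

lemma aydrl_scalar_iff :
    AYDrl (comul (R := k)) (antipode k) ((LinearMap.mul k k) ∘ₗ δ.toLinearMap)
        (LinearMap.toSpanSingleton k (H ⊗[k] k) (σ ⊗ₜ (1 : k))) ↔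
      ∀ (h : H) (r : Repr k h ℕ), ∑ i ∈ r.index, twistedAntipode δ (r.right i) * σ * r.left i =
        δ h • σ := by
  constructor
  · intro hayd h r
    let rb (i : ℕ) : Repr k (r.right i) ℕ := (nonempty_repr_nat (r.right i)).some
    have := congr(TensorProduct.rid k H $(hayd h 1 r.index r.left r.right (fun i => (rb i).index)
      (fun i => (rb i).left) (fun i => (rb i).right) {0} (fun _ => σ) (fun _ => 1) r.eq.symm
      (fun i _ => (rb i).eq.symm) (by simp)))
    rw [rid_aydrl_sum_eq_smul δ σ (m := 1) (fun i _ => (rb i).eq.symm) (by simp)] at this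
    simpa using this.symm
  · intro hsum h m s a b t c d u e m0 hΔ hb hco
    apply (TensorProduct.rid k H).injective
    rw [rid_aydrl_sum_eq_smul δ σ hb hco, hsum h ⟨s, a, b, hΔ.symm⟩]
    simp [smul_smul, mul_comm]

lemma forall_sum_twistedAntipode_mul_eq_smul_iff {σinv : H} (hσ : σ * σinv = 1)
    (hσ' : σinv * σ = 1) :
    (∀ (h : H) (r : Repr k h ℕ), ∑ i ∈ r.index, twistedAntipode δ (r.right i) * σ * r.left i =
        δ h • σ) ↔
      opConv (LinearMap.mulLeft k σ ∘ₗ LinearMap.mulRight k σinv) * opConv (twistedAntipode δ) =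
        opConv (Algebra.linearMap k H ∘ₗ δ.toLinearMap) := by
  have lhs (h : H) (r : Repr k h ℕ) :
      (opConv (LinearMap.mulLeft k σ ∘ₗ LinearMap.mulRight k σinv) *
        opConv (twistedAntipode δ)) h =
        .op ((∑ i ∈ r.index, twistedAntipode δ (r.right i) * σ * r.left i) * σinv) := by
    simp [opConv_mul_apply r, Finset.sum_mul, mul_assoc]
  have rhs (h : H) : opConv (Algebra.linearMap k H ∘ₗ δ.toLinearMap) h = .op (δ h • σ * σinv) := by
    simp [opConv, hσ, Algebra.algebraMap_eq_smul_one]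
  constructor
  · intro hsum
    ext h
    obtain ⟨r⟩ := nonempty_repr_nat (R := k) h
    rw [lhs h r, rhs h, hsum h r]
  · intro hconv h r
    have := MulOpposite.op_injective ((lhs h r).symm.trans (congr($hconv h).trans (rhs h)))
    simpa [mul_assoc, hσ'] using congr($this * σ)

end ScalarModule

theorem stmt1_general
    (δ : H →ₐ[k] k) (σ σinv : H)
    (hσinv : σ * σinv = 1) (hσinv' : σinv * σ = 1) :
    (AYDrl (Coalgebra.comul (R := k)) (HopfAlgebra.antipode (R := k))
        ((LinearMap.mul k k) ∘ₗ δ.toLinearMap)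
        (LinearMap.toSpanSingleton k (H ⊗[k] k) (σ ⊗ₜ (1 : k))) ∧
      StableL ((LinearMap.mul k k) ∘ₗ δ.toLinearMap)
        (LinearMap.toSpanSingleton k (H ⊗[k] k) (σ ⊗ₜ (1 : k)))) ↔
    (δ σ = 1 ∧ ∀ h : H, twistedAntipode δ (twistedAntipode δ h) = σ * h * σinv) := by
  rw [aydrl_scalar_iff, forall_sum_twistedAntipode_mul_eq_smul_iff δ σ hσinv hσinv',
    opConv_mul_opConv_twistedAntipode_eq_iff, stableL_scalar_iff, and_comm]
  simp [LinearMap.ext_iff, mul_assoc, eq_comm]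

/-- For a character `δ` and a group-like `σ`, the module
`k = ᵟk_σ` (right action by `δ`, left coaction by `σ`) is a stable right-left
anti-Yetter-Drinfeld module over `H` if and only if `(δ, σ)` is a modular pair
in involution, i.e. `δ(σ) = 1` and `S̃² = Ad_σ`. -/
theorem stmt1
    (Sinv : H →ₗ[k] H)
    (hS : ∀ h : H, Sinv (HopfAlgebra.antipode (R := k) h) = h)
    (hS' : ∀ h : H, HopfAlgebra.antipode (R := k) (Sinv h) = h)
    (δ : H →ₐ[k] k) (σ σinv : H)
    (hσ : Coalgebra.comul (R := k) σ = σ ⊗ₜ σ)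
    (hεσ : Coalgebra.counit (R := k) σ = (1 : k))
    (hσinv : σ * σinv = 1) (hσinv' : σinv * σ = 1) :
    (AYDrl (Coalgebra.comul (R := k)) (HopfAlgebra.antipode (R := k))
        ((LinearMap.mul k k) ∘ₗ δ.toLinearMap)
        (LinearMap.toSpanSingleton k (H ⊗[k] k) (σ ⊗ₜ (1 : k))) ∧
      StableL ((LinearMap.mul k k) ∘ₗ δ.toLinearMap)
        (LinearMap.toSpanSingleton k (H ⊗[k] k) (σ ⊗ₜ (1 : k)))) ↔
    (δ σ = 1 ∧ ∀ h : H, twistedAntipode δ (twistedAntipode δ h) = σ * h * σinv) :=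
  stmt1_general δ σ σinv hσinv hσinv'
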